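/- Let X and Y be uniformly discrete metric spaces with bounded geometry and suppose there is a coarse equivalence f : X → Y. For a uniformly discrete space Z let A(Z) denote the norm closure in B(ℓ²(Z×ℤ)) of the set of bounded operators S for which there exist a finite set F ⊆ ℤ and R ≥ 0 such that ⟨δ_{(z,j)}, S δ_{(z',j')}⟩ = 0 unless j, j' ∈ F and d(z,z') ≤ R. Then there exists a bijection θ : X×ℤ → Y×ℤ such that the unitary U_θ : ℓ²(X×ℤ) → ℓ²(Y×ℤ) determined by U_θ δ_p = δ_{θ(p)} satisfies U_θ A(X) U_θ* = A(Y); in particular A(X) and A(Y) are isomorphic as C*-algebras (A(Z) is the stabilization C*_u(Z) ⊗ K of the uniform Roe algebra, so C*_u(X) and C*_u(Y) are stably isomorphic, hence Morita equivalent). -/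

import Mathlib

open Metric
open scoped ENNReal

noncomputable section

def UniformlyDiscrete (X : Type*) [MetricSpace X] : Prop :=
  ∃ δ > (0:ℝ), ∀ x y : X, x ≠ y → δ ≤ dist x y

def BoundedGeometry (X : Type*) [MetricSpace X] : Prop :=
  ∀ R > (0:ℝ), ∃ N : ℕ, ∀ x : X,
    (closedBall x R).Finite ∧ (closedBall x R).ncard ≤ N

def IsUniformEmbeddingMap {X Y : Type*} [MetricSpace X] [MetricSpace Y]
    (f : X → Y) : Prop :=
  (∀ R > (0:ℝ), ∃ S > (0:ℝ), ∀ x y : X, dist x y ≤ R → dist (f x) (f y) ≤ S) ∧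
  (∀ R > (0:ℝ), ∃ S > (0:ℝ), ∀ x y : X, dist (f x) (f y) ≤ R → dist x y ≤ S)

def IsCoarseEquivalence {X Y : Type*} [MetricSpace X] [MetricSpace Y]
    (f : X → Y) : Prop :=
  IsUniformEmbeddingMap f ∧ ∃ C > (0:ℝ), ∀ y : Y, ∃ x : X, dist y (f x) ≤ C

/-- The Hilbert space ℓ²(Z). -/
abbrev ell2 (Z : Type*) : Type _ := lp (fun _ : Z => ℂ) 2

/-- The standard basis vector δ_p of ℓ²(Z). -/
def delta {Z : Type*} (p : Z) : ell2 Z :=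
  letI := Classical.decEq Z
  lp.single 2 p (1 : ℂ)

/-- The stabilisation `C*_u(Z) ⊗ K` of the uniform Roe algebra, realised as an
algebra of operators on ℓ²(Z × ℤ): the norm closure of the set of bounded
operators whose matrix entries are supported on finitely many ℤ-indices and
within finite distance of the diagonal in Z. -/
def stabRoe (Z : Type*) [MetricSpace Z] : Set (ell2 (Z × ℤ) →L[ℂ] ell2 (Z × ℤ)) :=
  closure {S : ell2 (Z × ℤ) →L[ℂ] ell2 (Z × ℤ) |
    ∃ (F : Finset ℤ) (R : ℝ), 0 ≤ R ∧ ∀ p q : Z × ℤ,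
      (p.2 ∉ F ∨ q.2 ∉ F ∨ R < dist p.1 q.1) →
        (inner ℂ (delta p) (S (delta q)) : ℂ) = 0}

/-! ### Auxiliary material -/

lemma memℓp_comp_equiv {α β : Type*} (e : α ≃ β) (g : ell2 α) :
    Memℓp (fun b => g (e.symm b)) 2 := by
  have h := lp.memℓp g
  rw [memℓp_gen_iff (by norm_num)] at h ⊢
  exact (e.symm.summable_iff (f := fun a => ‖g a‖ ^ (2:ℝ≥0∞).toReal)).2 h

/-- The linear isometric equivalence of ℓ² spaces induced by a bijection of index sets. -/
def lpCongr {α β : Type*} (e : α ≃ β) : ell2 α ≃ₗᵢ[ℂ] ell2 β where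
  toFun g := ⟨fun b => g (e.symm b), memℓp_comp_equiv e g⟩
  invFun h := ⟨fun a => h (e.symm.symm a), memℓp_comp_equiv e.symm h⟩
  left_inv g := by apply lp.ext; funext a; simp
  right_inv h := by apply lp.ext; funext b; simp
  map_add' g h := by apply lp.ext; funext b; rfl
  map_smul' c g := by apply lp.ext; funext b; rfl
  norm_map' g := by
    rw [lp.norm_eq_tsum_rpow (by norm_num) g, lp.norm_eq_tsum_rpow (by norm_num)]
    congr 1
    exact e.symm.tsum_eq (fun a => ‖g a‖ ^ (2:ℝ≥0∞).toReal)

lemma lpCongr_delta {α β : Type*} (e : α ≃ β) (a : α) :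
    lpCongr e (delta a) = delta (e a) := by
  classical
  apply lp.ext; funext b
  show (delta a : ∀ _ : α, ℂ) (e.symm b) = _
  simp only [delta]
  by_cases h : b = e a
  · subst h; rw [show e.symm (e a) = a from e.symm_apply_apply a]
    rw [lp.single_apply_self, lp.single_apply_self]
  · rw [lp.single_apply_ne _ _ _ (by simpa using fun h' => h (by rw [← h', e.apply_symm_apply])),
      lp.single_apply_ne _ _ _ h]

/-- A bijection `Fin c × ℤ ≃ ℤ` with controlled growth. -/
def finZEquiv (c : ℕ) (hc : 0 < c) : (Fin c × ℤ) ≃ ℤ where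
  toFun p := p.2 * c + p.1
  invFun m := (⟨(m % c).toNat, by
      have h1 : (0:ℤ) < c := by exact_mod_cast hc
      have h3 := Int.emod_lt_of_pos m h1
      have h2 := Int.emod_nonneg m h1.ne'
      omega⟩, m / c)
  left_inv p := by
    obtain ⟨i, n⟩ := p
    have h1 : (0:ℤ) < c := by exact_mod_cast hc
    have hi : (i:ℤ) < c := by exact_mod_cast i.isLt
    have hi0 : (0:ℤ) ≤ i := Int.ofNat_nonneg i
    have key : n * c + i = i + c * n := by ring
    have hmod : (n * (c:ℤ) + i) % c = i := by
      rw [key, Int.add_mul_emod_self_left, Int.emod_eq_of_lt hi0 hi]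
    have hdiv : (n * (c:ℤ) + i) / c = n := by
      rw [key, Int.add_mul_ediv_left _ _ h1.ne', Int.ediv_eq_zero_of_lt hi0 hi, zero_add]
    ext
    · simp only [hmod]; omega
    · simpa using hdiv
  right_inv m := by
    have h1 : (0:ℤ) < c := by exact_mod_cast hc
    have h2 := Int.emod_nonneg m h1.ne'
    simp only []
    have : ((m % c).toNat : ℤ) = m % c := Int.toNat_of_nonneg h2
    rw [this]
    exact Int.ediv_mul_add_emod m c

lemma finZEquiv_bound (c : ℕ) (hc : 0 < c) (p : Fin c × ℤ) :
    |finZEquiv c hc p| ≤ c * (|p.2| + 1) := by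
  obtain ⟨i, n⟩ := p
  have hi : (i:ℤ) < c := by exact_mod_cast i.isLt
  have hi0 : (0:ℤ) ≤ i := Int.ofNat_nonneg i
  calc |n * (c:ℤ) + i| ≤ |n * (c:ℤ)| + |(i:ℤ)| := abs_add_le _ _
    _ = |n| * c + i := by
        rw [abs_mul, abs_of_nonneg hi0, abs_of_nonneg (by positivity : (0:ℤ) ≤ (c:ℤ))]
    _ ≤ |n| * c + c := by omega
    _ = c * (|n| + 1) := by ring

lemma finZEquiv_symm_bound (c : ℕ) (hc : 0 < c) (m : ℤ) :
    |((finZEquiv c hc).symm m).2| ≤ |m| := by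
  show |m / c| ≤ |m|
  exact Int.abs_ediv_le_abs m c

/-- `A × ℤ ≃ ℤ` for a finite nonempty `A`, with controlled growth. -/
def zEquivInt (A : Type*) [Fintype A] [Nonempty A] : A × ℤ ≃ ℤ :=
  ((Fintype.equivFin A).prodCongr (Equiv.refl ℤ)).trans
    (finZEquiv (Fintype.card A) Fintype.card_pos)

lemma zEquivInt_bound (A : Type*) [Fintype A] [Nonempty A] (p : A × ℤ) :
    |zEquivInt A p| ≤ Fintype.card A * (|p.2| + 1) :=
  finZEquiv_bound _ Fintype.card_pos _

lemma zEquivInt_symm_bound (A : Type*) [Fintype A] [Nonempty A] (m : ℤ) :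
    |((zEquivInt A).symm m).2| ≤ |m| :=
  finZEquiv_symm_bound _ Fintype.card_pos _

/-- Conjugation by a unitary coming from a "band and distance controlled" bijection maps the
stabilised Roe algebra into the stabilised Roe algebra. -/
lemma conj_mem {X Y : Type} [MetricSpace X] [MetricSpace Y]
    (θ : X × ℤ ≃ Y × ℤ) (U : ell2 (X × ℤ) ≃ₗᵢ[ℂ] ell2 (Y × ℤ))
    (hU : ∀ p, U (delta p) = delta (θ p))
    (HB : ∀ F : Finset ℤ, ∃ F' : Finset ℤ, ∀ p : X × ℤ, p.2 ∈ F → (θ p).2 ∈ F')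
    (HD : ∀ R : ℝ, 0 ≤ R → ∃ R', 0 ≤ R' ∧ ∀ p q : X × ℤ,
      dist p.1 q.1 ≤ R → dist (θ p).1 (θ q).1 ≤ R')
    {S : ell2 (X × ℤ) →L[ℂ] ell2 (X × ℤ)} (hS : S ∈ stabRoe X) :
    (U.toLinearIsometry.toContinuousLinearMap.comp
      (S.comp U.symm.toLinearIsometry.toContinuousLinearMap)) ∈ stabRoe Y := by
  set A := U.toLinearIsometry.toContinuousLinearMap with hA
  set B := U.symm.toLinearIsometry.toContinuousLinearMap with hB
  have hUs : ∀ q : Y × ℤ, U.symm (delta q) = delta (θ.symm q) := by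
    intro q
    have h := hU (θ.symm q)
    rw [θ.apply_symm_apply] at h
    rw [← h, U.symm_apply_apply]
  have hcont : Continuous (fun T : ell2 (X × ℤ) →L[ℂ] ell2 (X × ℤ) => A.comp (T.comp B)) := by
    refine (LipschitzWith.of_dist_le_mul (K := 1) ?_).continuous
    intro T T'
    rw [dist_eq_norm, dist_eq_norm, NNReal.coe_one, one_mul]
    have heq : A.comp (T.comp B) - A.comp (T'.comp B) = A.comp ((T - T').comp B) := by
      ext v; simp
    rw [heq]
    calc ‖A.comp ((T - T').comp B)‖ ≤ ‖A‖ * ‖(T - T').comp B‖ :=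
          ContinuousLinearMap.opNorm_comp_le _ _
      _ ≤ ‖A‖ * (‖T - T'‖ * ‖B‖) := by
          gcongr; exact ContinuousLinearMap.opNorm_comp_le _ _
      _ ≤ 1 * (‖T - T'‖ * 1) := by
          have hA1 : ‖A‖ ≤ 1 := U.toLinearIsometry.norm_toContinuousLinearMap_le
          have hB1 : ‖B‖ ≤ 1 := U.symm.toLinearIsometry.norm_toContinuousLinearMap_le
          calc ‖A‖ * (‖T - T'‖ * ‖B‖) ≤ 1 * (‖T - T'‖ * ‖B‖) := by
                apply mul_le_mul_of_nonneg_right hA1; positivity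
            _ ≤ 1 * (‖T - T'‖ * 1) := by
                apply mul_le_mul_of_nonneg_left _ zero_le_one
                exact mul_le_mul_of_nonneg_left hB1 (norm_nonneg _)
      _ = ‖T - T'‖ := by ring
  rw [stabRoe] at hS ⊢
  refine map_mem_closure
    (f := fun T : ell2 (X × ℤ) →L[ℂ] ell2 (X × ℤ) => A.comp (T.comp B)) hcont hS ?_
  rintro T ⟨F, R, hR, hT⟩
  obtain ⟨F', hF'⟩ := HB F
  obtain ⟨R', hR', hRR⟩ := HD R hR
  refine ⟨F', R', hR', ?_⟩
  intro p q hpq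
  have key : (inner ℂ (delta p) ((A.comp (T.comp B)) (delta q)) : ℂ)
      = inner ℂ (delta (θ.symm p)) (T (delta (θ.symm q))) := by
    have h1 : (A.comp (T.comp B)) (delta q) = U (T (delta (θ.symm q))) := by
      simp [hA, hB, hUs q]
    rw [h1]
    conv_lhs => rw [show delta p = U (delta (θ.symm p)) by rw [hU, θ.apply_symm_apply]]
    exact U.inner_map_map _ _
  rw [key]
  apply hT
  rcases hpq with h | h | h
  · left
    intro hmem
    exact h (by simpa [θ.apply_symm_apply] using hF' (θ.symm p) hmem)
  · right; left
    intro hmem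
    exact h (by simpa [θ.apply_symm_apply] using hF' (θ.symm q) hmem)
  · right; right
    by_contra hc
    push_neg at hc
    have := hRR _ _ hc
    rw [θ.apply_symm_apply, θ.apply_symm_apply] at this
    exact absurd this (not_le.2 h)

/-- Construction of the controlled bijection `X × ℤ ≃ Y × ℤ` from a coarse equivalence. -/
lemma exists_theta {X Y : Type} [MetricSpace X] [MetricSpace Y]
    (hbgX : BoundedGeometry X) (hbgY : BoundedGeometry Y)
    (f : X → Y) (hf : IsCoarseEquivalence f) :
    ∃ (θ : X × ℤ ≃ Y × ℤ) (C : ℝ) (N M : ℕ), 0 ≤ C ∧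
      (∀ p : X × ℤ, dist (f p.1) ((θ p).1) ≤ C ∧ |(θ p).2| ≤ N * (|p.2| + 1)) ∧
      (∀ q : Y × ℤ, dist (f ((θ.symm q).1)) q.1 ≤ C ∧ |(θ.symm q).2| ≤ M * (|q.2| + 1)) := by
  obtain ⟨⟨hfwd, hbwd⟩, C, hC0, hC⟩ := hf
  have hgex : ∀ y : Y, ∃ x : X, dist y (f x) ≤ C ∧ ((∃ x', f x' = y) → f x = y) := by
    intro y
    by_cases h : ∃ x', f x' = y
    · obtain ⟨x', hx'⟩ := h
      exact ⟨x', by rw [hx', dist_self]; exact le_of_lt hC0, fun _ => hx'⟩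
    · obtain ⟨x, hx⟩ := hC y
      exact ⟨x, hx, fun h' => absurd h' h⟩
  choose g hg1 hg2 using hgex
  set r : Y → Y := fun y => f (g y) with hr
  set B := {y : Y // ∃ x, f x = y} with hB
  set fX : X → B := fun x => ⟨f x, x, rfl⟩ with hfX
  set fY : Y → B := fun y => ⟨r y, g y, rfl⟩ with hfY
  obtain ⟨S₁, hS₁0, hS₁⟩ := hbwd 1 one_pos
  obtain ⟨N, hN⟩ := hbgX (max S₁ 1) (lt_max_of_lt_right one_pos)
  obtain ⟨M, hM⟩ := hbgY (max C 1) (lt_max_of_lt_right one_pos)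
  have hXfib : ∀ b : B, ∃ x₀ : X, fX x₀ = b := by
    rintro ⟨y, x, rfl⟩
    exact ⟨x, rfl⟩
  have hXsub : ∀ b : B, ∀ x₀, fX x₀ = b → {x | fX x = b} ⊆ closedBall x₀ (max S₁ 1) := by
    intro b x₀ h₀ x hx
    have : f x = f x₀ := by
      have h1 : (fX x).1 = (fX x₀).1 := by rw [hx, h₀]
      simpa [hfX] using h1
    have : dist (f x) (f x₀) ≤ 1 := by simp [this]
    exact mem_closedBall.2 ((hS₁ x x₀ this).trans (le_max_left _ _))
  have hXfin : ∀ b : B, ({x | fX x = b}).Finite := by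
    intro b
    obtain ⟨x₀, h₀⟩ := hXfib b
    exact (hN x₀).1.subset (hXsub b x₀ h₀)
  haveI instXfin : ∀ b : B, Fintype {x // fX x = b} := fun b => (hXfin b).fintype
  haveI instXne : ∀ b : B, Nonempty {x // fX x = b} := by
    intro b; obtain ⟨x₀, h₀⟩ := hXfib b; exact ⟨⟨x₀, h₀⟩⟩
  have hXcard : ∀ b : B, Fintype.card {x // fX x = b} ≤ N := by
    intro b
    obtain ⟨x₀, h₀⟩ := hXfib b
    calc Fintype.card {x // fX x = b} = Nat.card {x // fX x = b} :=
          (Nat.card_eq_fintype_card).symm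
      _ = ({x | fX x = b}).ncard := Nat.card_coe_set_eq _
      _ ≤ (closedBall x₀ (max S₁ 1)).ncard :=
          Set.ncard_le_ncard (hXsub b x₀ h₀) (hN x₀).1
      _ ≤ N := (hN x₀).2
  have hYfib : ∀ b : B, fY b.1 = b := by
    rintro ⟨y, x, rfl⟩
    exact Subtype.ext (hg2 (f x) ⟨x, rfl⟩)
  have hYsub : ∀ b : B, {y | fY y = b} ⊆ closedBall b.1 (max C 1) := by
    intro b y hy
    have h1 : r y = b.1 := by
      have := congrArg Subtype.val hy
      simpa [hfY] using this
    have : dist y b.1 ≤ C := by rw [← h1]; exact hg1 y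
    exact mem_closedBall.2 (this.trans (le_max_left _ _))
  have hYfin : ∀ b : B, ({y | fY y = b}).Finite := fun b => (hM b.1).1.subset (hYsub b)
  haveI instYfin : ∀ b : B, Fintype {y // fY y = b} := fun b => (hYfin b).fintype
  haveI instYne : ∀ b : B, Nonempty {y // fY y = b} := fun b => ⟨⟨b.1, hYfib b⟩⟩
  have hYcard : ∀ b : B, Fintype.card {y // fY y = b} ≤ M := by
    intro b
    calc Fintype.card {y // fY y = b} = Nat.card {y // fY y = b} :=
          (Nat.card_eq_fintype_card).symm
      _ = ({y | fY y = b}).ncard := Nat.card_coe_set_eq _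
      _ ≤ (closedBall b.1 (max C 1)).ncard := Set.ncard_le_ncard (hYsub b) (hM b.1).1
      _ ≤ M := (hM b.1).2
  set w : ∀ b : B, ({x // fX x = b} × ℤ) ≃ ({y // fY y = b} × ℤ) :=
    fun b => (zEquivInt _).trans (zEquivInt _).symm with hw
  set θ : X × ℤ ≃ Y × ℤ :=
    (((Equiv.sigmaFiberEquiv fX).symm.prodCongr (Equiv.refl ℤ)).trans
      ((Equiv.sigmaProdDistrib _ ℤ).trans
        ((Equiv.sigmaCongrRight w).trans
          ((Equiv.sigmaProdDistrib _ ℤ).symm.trans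
            ((Equiv.sigmaFiberEquiv fY).prodCongr (Equiv.refl ℤ)))))) with hθ
  have hθap : ∀ x : X, ∀ n : ℤ,
      θ (x, n) = ((w (fX x) (⟨x, rfl⟩, n)).1.1, (w (fX x) (⟨x, rfl⟩, n)).2) := by
    intro x n
    rfl
  have hθsym : ∀ y : Y, ∀ m : ℤ,
      θ.symm (y, m) = (((w (fY y)).symm (⟨y, rfl⟩, m)).1.1,
        ((w (fY y)).symm (⟨y, rfl⟩, m)).2) := by
    intro y m
    rfl
  refine ⟨θ, C, N, M, le_of_lt hC0, ?_, ?_⟩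
  · rintro ⟨x, n⟩
    rw [hθap x n]
    constructor
    · have h2 := (w (fX x) (⟨x, rfl⟩, n)).1.2
      have h3 : r ((w (fX x) (⟨x, rfl⟩, n)).1.1) = f x := by
        have := congrArg Subtype.val h2
        simpa [hfY, hfX] using this
      have h4 := hg1 ((w (fX x) (⟨x, rfl⟩, n)).1.1)
      rw [show f (g ((w (fX x) (⟨x, rfl⟩, n)).1.1)) = r ((w (fX x) (⟨x, rfl⟩, n)).1.1) from rfl,
        h3] at h4
      simpa [dist_comm] using h4
    · show |((w (fX x)) (⟨x, rfl⟩, n)).2| ≤ _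
      have h5 : (w (fX x) (⟨x, rfl⟩, n)).2
          = ((zEquivInt {y // fY y = fX x}).symm
              (zEquivInt {x' // fX x' = fX x} (⟨x, rfl⟩, n))).2 := rfl
      rw [h5]
      calc |((zEquivInt {y // fY y = fX x}).symm
              (zEquivInt {x' // fX x' = fX x} (⟨x, rfl⟩, n))).2|
          ≤ |zEquivInt {x' // fX x' = fX x} (⟨x, rfl⟩, n)| := zEquivInt_symm_bound _ _
        _ ≤ Fintype.card {x' // fX x' = fX x} * (|n| + 1) := zEquivInt_bound _ _
        _ ≤ N * (|n| + 1) := by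
            have := hXcard (fX x)
            have h6 : (0:ℤ) ≤ |n| + 1 := by positivity
            exact mul_le_mul_of_nonneg_right (by exact_mod_cast this) h6
  · rintro ⟨y, m⟩
    rw [hθsym y m]
    constructor
    · have h2 := ((w (fY y)).symm (⟨y, rfl⟩, m)).1.2
      have h3 : f (((w (fY y)).symm (⟨y, rfl⟩, m)).1.1) = r y := by
        have := congrArg Subtype.val h2
        simpa [hfY, hfX] using this
      have h4 := hg1 y
      rw [show f (g y) = r y from rfl] at h4
      rw [h3]
      simpa [dist_comm] using h4
    · show |((w (fY y)).symm (⟨y, rfl⟩, m)).2| ≤ _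
      have h5 : ((w (fY y)).symm (⟨y, rfl⟩, m)).2
          = ((zEquivInt {x // fX x = fY y}).symm
              (zEquivInt {y' // fY y' = fY y} (⟨y, rfl⟩, m))).2 := rfl
      rw [h5]
      calc |((zEquivInt {x // fX x = fY y}).symm
              (zEquivInt {y' // fY y' = fY y} (⟨y, rfl⟩, m))).2|
          ≤ |zEquivInt {y' // fY y' = fY y} (⟨y, rfl⟩, m)| := zEquivInt_symm_bound _ _
        _ ≤ Fintype.card {y' // fY y' = fY y} * (|m| + 1) := zEquivInt_bound _ _
        _ ≤ M * (|m| + 1) := by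
            have := hYcard (fY y)
            have h6 : (0:ℤ) ≤ |m| + 1 := by positivity
            exact mul_le_mul_of_nonneg_right (by exact_mod_cast this) h6

/-- From the band bound for a bijection derive the finite-band condition. -/
lemma band_of_bound {X Y : Type} (θ : X × ℤ ≃ Y × ℤ) (N : ℕ)
    (h : ∀ p : X × ℤ, |(θ p).2| ≤ N * (|p.2| + 1)) :
    ∀ F : Finset ℤ, ∃ F' : Finset ℤ, ∀ p : X × ℤ, p.2 ∈ F → (θ p).2 ∈ F' := by
  intro F
  set k : ℕ := F.sup Int.natAbs with hk
  refine ⟨Finset.Icc (-(N * (k + 1) : ℤ)) (N * (k + 1)), ?_⟩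
  intro p hp
  have h1 : p.2.natAbs ≤ k := Finset.le_sup (f := Int.natAbs) hp
  have h2 : |p.2| ≤ (k : ℤ) := by
    rw [Int.abs_eq_natAbs]
    exact_mod_cast h1
  have h3 : |(θ p).2| ≤ (N : ℤ) * (k + 1) := by
    calc |(θ p).2| ≤ N * (|p.2| + 1) := h p
      _ ≤ N * (k + 1) := by
          apply mul_le_mul_of_nonneg_left _ (by positivity)
          omega
  rw [Finset.mem_Icc]
  constructor <;> [skip; skip] <;>
    · have := abs_le.1 h3
      omega

theorem stmt6 (X Y : Type) [MetricSpace X] [MetricSpace Y]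
    (hudX : UniformlyDiscrete X) (hbgX : BoundedGeometry X)
    (hudY : UniformlyDiscrete Y) (hbgY : BoundedGeometry Y)
    (f : X → Y) (hf : IsCoarseEquivalence f) :
    ∃ (θ : X × ℤ ≃ Y × ℤ) (U : ell2 (X × ℤ) ≃ₗᵢ[ℂ] ell2 (Y × ℤ)),
      (∀ p : X × ℤ, U (delta p) = delta (θ p)) ∧
      (∀ S : ell2 (X × ℤ) →L[ℂ] ell2 (X × ℤ),
        S ∈ stabRoe X ↔
          (U.toLinearIsometry.toContinuousLinearMap.comp
            (S.comp U.symm.toLinearIsometry.toContinuousLinearMap)) ∈ stabRoe Y) := by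
  obtain ⟨θ, C, N, M, hC0, hP, hP'⟩ := exists_theta hbgX hbgY f hf
  obtain ⟨⟨hfwd, hbwd⟩, C₂, hC₂0, hC₂⟩ := hf
  set U : ell2 (X × ℤ) ≃ₗᵢ[ℂ] ell2 (Y × ℤ) := lpCongr θ with hUdef
  have hU : ∀ p : X × ℤ, U (delta p) = delta (θ p) := fun p => lpCongr_delta θ p
  have hUs : ∀ q : Y × ℤ, U.symm (delta q) = delta (θ.symm q) := by
    intro q
    have h := hU (θ.symm q)
    rw [θ.apply_symm_apply] at h
    rw [← h, U.symm_apply_apply]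
  -- band conditions
  have HBf : ∀ F : Finset ℤ, ∃ F' : Finset ℤ, ∀ p : X × ℤ, p.2 ∈ F → (θ p).2 ∈ F' :=
    band_of_bound θ N (fun p => (hP p).2)
  have HBb : ∀ F : Finset ℤ, ∃ F' : Finset ℤ, ∀ q : Y × ℤ, q.2 ∈ F → (θ.symm q).2 ∈ F' :=
    band_of_bound θ.symm M (fun q => (hP' q).2)
  -- distance conditions
  have HDf : ∀ R : ℝ, 0 ≤ R → ∃ R', 0 ≤ R' ∧ ∀ p q : X × ℤ,
      dist p.1 q.1 ≤ R → dist (θ p).1 (θ q).1 ≤ R' := by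
    intro R hR
    obtain ⟨S₁, hS₁0, hS₁⟩ := hfwd (R + 1) (by linarith)
    refine ⟨S₁ + 2 * C, by linarith, ?_⟩
    intro p q hpq
    have h1 := (hP p).1
    have h2 := (hP q).1
    have h3 : dist (f p.1) (f q.1) ≤ S₁ := hS₁ _ _ (by linarith)
    calc dist (θ p).1 (θ q).1
        ≤ dist (θ p).1 (f p.1) + dist (f p.1) (f q.1) + dist (f q.1) (θ q).1 :=
          dist_triangle4 _ _ _ _
      _ ≤ C + S₁ + C := by
          rw [dist_comm (θ p).1 (f p.1)]
          gcongr
      _ = S₁ + 2 * C := by ring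
  have HDb : ∀ R : ℝ, 0 ≤ R → ∃ R', 0 ≤ R' ∧ ∀ p q : Y × ℤ,
      dist p.1 q.1 ≤ R → dist (θ.symm p).1 (θ.symm q).1 ≤ R' := by
    intro R hR
    obtain ⟨S₂, hS₂0, hS₂⟩ := hbwd (R + 2 * C + 1) (by linarith)
    refine ⟨S₂, le_of_lt hS₂0, ?_⟩
    intro p q hpq
    have h1 := (hP' p).1
    have h2 := (hP' q).1
    apply hS₂
    calc dist (f (θ.symm p).1) (f (θ.symm q).1)
        ≤ dist (f (θ.symm p).1) p.1 + dist p.1 q.1 + dist q.1 (f (θ.symm q).1) :=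
          dist_triangle4 _ _ _ _
      _ ≤ C + R + C := by
          rw [dist_comm q.1 (f (θ.symm q).1)]
          gcongr
      _ ≤ R + 2 * C + 1 := by linarith
  refine ⟨θ, U, hU, fun S => ⟨?_, ?_⟩⟩
  · intro hS
    exact conj_mem θ U hU HBf HDf hS
  · intro hS
    have h2 := conj_mem θ.symm U.symm hUs HBb HDb hS
    have h3 : (U.symm.toLinearIsometry.toContinuousLinearMap.comp
        (((U.toLinearIsometry.toContinuousLinearMap.comp
          (S.comp U.symm.toLinearIsometry.toContinuousLinearMap))).comp
          U.symm.symm.toLinearIsometry.toContinuousLinearMap)) = S := by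
      ext v
      simp [LinearIsometryEquiv.symm_symm]
    rwa [h3] at h2
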